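/- arXiv:math/0401063 — 9 statements merged into one kernel-verified Lean document; each statement's English description precedes it below -/
import Mathlib

section
/- For any feasible tuple (m, x, τ, λ) of the VaR LPEC, there exists an index i ∈ {1,...,k} such that m ≥ x^T y^i. Consequently m ≥ min_{1≤j≤k} min_{x∈X} x^T y^j. -/
/-- For any feasible tuple (m,x,τ,λ) of the VaR LPEC, some index i
satisfies m ≥ x^T y^i; consequently m ≥ min_j min_{x'∈X} x'^T y^j, expressed as:
any lower bound of all x'^T y^j over X is a lower bound for m. -/
theorem stmt_1
    (n k : ℕ) (X : Set (Fin n → ℝ))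
    (β : ℝ) (hβ : β ∈ Set.Ioo (0:ℝ) 1)
    (p : Fin k → ℝ) (hp : ∀ i, 0 < p i) (hp1 : ∑ i, p i = 1)
    (y : Fin k → Fin n → ℝ)
    (m : ℝ) (x : Fin n → ℝ) (τ lam : Fin k → ℝ)
    (hx : x ∈ X)
    (hτ : ∀ i, 0 ≤ τ i) (hlamub : ∀ i, lam i ≤ p i / (1 - β))
    (hlam : ∀ i, 0 ≤ lam i) (hs : ∀ i, 0 ≤ m + τ i - ∑ j, x j * y i j)
    (hc1 : ∀ i, τ i * (p i / (1 - β) - lam i) = 0)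
    (hc2 : ∀ i, lam i * (m + τ i - ∑ j, x j * y i j) = 0)
    (hsum : ∑ i, lam i = 1) :
    (∃ i : Fin k, ∑ j, x j * y i j ≤ m) ∧
    (∀ c : ℝ, (∀ (i : Fin k), ∀ x' ∈ X, c ≤ ∑ j, x' j * y i j) → c ≤ m) := by
  obtain ⟨hβ0, hβ1⟩ := hβ
  have h1β : (0:ℝ) < 1 - β := by linarith
  have hex : ∃ i : Fin k, lam i ≠ p i / (1 - β) := by
    by_contra h
    push_neg at h
    have : ∑ i, lam i = ∑ i, p i / (1 - β) := Finset.sum_congr rfl (fun i _ => h i)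
    rw [hsum, ← Finset.sum_div, hp1] at this
    rw [eq_div_iff (ne_of_gt h1β)] at this
    linarith
  obtain ⟨i, hi⟩ := hex
  have hfac : p i / (1 - β) - lam i ≠ 0 := fun h => hi (by linarith)
  have hτi : τ i = 0 := by
    rcases mul_eq_zero.mp (hc1 i) with h | h
    · exact h
    · exact absurd h hfac
  have hkey : ∑ j, x j * y i j ≤ m := by
    have := hs i
    rw [hτi] at this
    linarith
  exact ⟨⟨i, hkey⟩, fun c hc => le_trans (hc i x hx) hkey⟩
end

section
/- For any feasible tuple (m, x, τ, λ) of the VaR LPEC, τ_i = max(0, x^T y^i - m) for every i = 1,...,k. -/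
/-- feasibility of the VaR LPEC forces τ_i = max(0, x^T y^i - m). -/
theorem stmt_2
    (n k : ℕ)
    (β : ℝ) (hβ : β ∈ Set.Ioo (0:ℝ) 1)
    (p : Fin k → ℝ) (hp : ∀ i, 0 < p i) (hp1 : ∑ i, p i = 1)
    (y : Fin k → Fin n → ℝ)
    (m : ℝ) (x : Fin n → ℝ) (τ lam : Fin k → ℝ)
    (hτ : ∀ i, 0 ≤ τ i) (hlamub : ∀ i, lam i ≤ p i / (1 - β))
    (hlam : ∀ i, 0 ≤ lam i) (hs : ∀ i, 0 ≤ m + τ i - ∑ j, x j * y i j)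
    (hc1 : ∀ i, τ i * (p i / (1 - β) - lam i) = 0)
    (hc2 : ∀ i, lam i * (m + τ i - ∑ j, x j * y i j) = 0)
    (hsum : ∑ i, lam i = 1) :
    ∀ i : Fin k, τ i = max 0 ((∑ j, x j * y i j) - m) := by
  intro i
  rcases eq_or_lt_of_le (hτ i) with h0 | hpos
  · -- τ i = 0, so m ≥ x^T y^i
    have := hs i
    rw [← h0] at this ⊢
    rw [max_eq_left (by linarith)]
  · -- τ i > 0 ⇒ lam i = p i/(1-β) > 0 ⇒ m + τ i = x^T y^i
    have h1 : p i / (1 - β) - lam i = 0 := by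
      rcases mul_eq_zero.mp (hc1 i) with h | h
      · linarith
      · exact h
    have hβ1 : 0 < 1 - β := by have := hβ.2; linarith
    have hlpos : 0 < lam i := by
      have : lam i = p i / (1 - β) := by linarith
      rw [this]; exact div_pos (hp i) hβ1
    have h2 : m + τ i - ∑ j, x j * y i j = 0 := by
      rcases mul_eq_zero.mp (hc2 i) with h | h
      · linarith
      · exact h
    rw [max_eq_right (by linarith)]
    linarith
end

section
/- For any feasible tuple (m, x, τ, λ) of the VaR LPEC, the identity m = Σ_{j=1}^k [λ_j x^T y^j - (p_j/(1-β)) τ_j] holds. -/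
/-- the identity m = Σ_j [λ_j x^T y^j - (p_j/(1-β)) τ_j]. -/
theorem stmt_3
    (n k : ℕ)
    (β : ℝ) (hβ : β ∈ Set.Ioo (0:ℝ) 1)
    (p : Fin k → ℝ) (hp : ∀ i, 0 < p i) (hp1 : ∑ i, p i = 1)
    (y : Fin k → Fin n → ℝ)
    (m : ℝ) (x : Fin n → ℝ) (τ lam : Fin k → ℝ)
    (hτ : ∀ i, 0 ≤ τ i) (hlamub : ∀ i, lam i ≤ p i / (1 - β))
    (hlam : ∀ i, 0 ≤ lam i) (hs : ∀ i, 0 ≤ m + τ i - ∑ j, x j * y i j)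
    (hc1 : ∀ i, τ i * (p i / (1 - β) - lam i) = 0)
    (hc2 : ∀ i, lam i * (m + τ i - ∑ j, x j * y i j) = 0)
    (hsum : ∑ i, lam i = 1) :
    m = ∑ j, (lam j * (∑ l, x l * y j l) - p j / (1 - β) * τ j) := by
  have key : ∀ j, lam j * (∑ l, x l * y j l) - p j / (1 - β) * τ j
      = lam j * m := by
    intro j
    have h1 := hc1 j
    have h2 := hc2 j
    nlinarith [h1, h2]
  rw [Finset.sum_congr rfl (fun j _ => key j), ← Finset.sum_mul, hsum, one_mul]
end

section
/- If (m, x, τ, λ) is feasible to the VaR LPEC and m < x^T y^j for all j = 1,...,k, then m is a convex combination of {x^T y^1, ..., x^T y^k} with weights ((1-β)/β)(p_j/(1-β) - λ_j), leading to a contradiction; hence some index i satisfies m ≥ x^T y^i. -/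
/-- if m < x^T y^j for all j then m is the stated convex combination
(a contradiction); hence some index i satisfies m ≥ x^T y^i. -/
theorem stmt_5
    (n k : ℕ)
    (β : ℝ) (hβ : β ∈ Set.Ioo (0:ℝ) 1)
    (p : Fin k → ℝ) (hp : ∀ i, 0 < p i) (hp1 : ∑ i, p i = 1)
    (y : Fin k → Fin n → ℝ)
    (m : ℝ) (x : Fin n → ℝ) (τ lam : Fin k → ℝ)
    (hτ : ∀ i, 0 ≤ τ i) (hlamub : ∀ i, lam i ≤ p i / (1 - β))
    (hlam : ∀ i, 0 ≤ lam i) (hs : ∀ i, 0 ≤ m + τ i - ∑ j, x j * y i j)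
    (hc1 : ∀ i, τ i * (p i / (1 - β) - lam i) = 0)
    (hc2 : ∀ i, lam i * (m + τ i - ∑ j, x j * y i j) = 0)
    (hsum : ∑ i, lam i = 1) :
    ((∀ j : Fin k, m < ∑ l, x l * y j l) →
        m = ∑ j, ((1 - β) / β * (p j / (1 - β) - lam j)) * ∑ l, x l * y j l) ∧
    (∃ i : Fin k, ∑ j, x j * y i j ≤ m) := by
  obtain ⟨hb0, hb1⟩ := hβ
  have key : ¬ (∀ j : Fin k, m < ∑ l, x l * y j l) := by
    intro h
    have hlameq : ∀ i, lam i = p i / (1 - β) := by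
      intro i
      have hτpos : 0 < τ i := by have := hs i; have := h i; linarith
      rcases mul_eq_zero.mp (hc1 i) with h1 | h1
      · linarith
      · linarith
    have h1 : ∑ i, lam i = ∑ i, p i / (1 - β) :=
      Finset.sum_congr rfl fun i _ => hlameq i
    rw [← Finset.sum_div, hp1, hsum] at h1
    have hne : 1 - β ≠ 0 := by linarith
    field_simp at h1
    linarith
  refine ⟨fun h => absurd h key, ?_⟩
  by_contra hno
  push_neg at hno
  exact key fun j => hno j
end

section
/- If (m, x, τ, λ) is feasible to the VaR LPEC with m ≥ 0, then setting z^i := λ_i x for each i, the tuple (m, x, z, τ) satisfies: x = Σ_j z^j, m = Σ_j [(z^j)^T y^j - (p_j/(1-β)) τ_j], and for each i: m + τ_i - x^T y^i ≥ 0, 0 ≤ (z^i)^T y^i - (p_i/(1-β)) τ_i ≤ (p_i/(1-β)) m, and τ_i ≥ 0. -/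
/-- if (m,x,τ,λ) is LPEC-feasible with m ≥ 0 then, with z^i := λ_i x,
the tuple (m,x,z,τ) is feasible to the LP relaxation. -/
theorem stmt_6
    (n k : ℕ)
    (β : ℝ) (hβ : β ∈ Set.Ioo (0:ℝ) 1)
    (p : Fin k → ℝ) (hp : ∀ i, 0 < p i) (hp1 : ∑ i, p i = 1)
    (y : Fin k → Fin n → ℝ)
    (m : ℝ) (x : Fin n → ℝ) (τ lam : Fin k → ℝ)
    (hτ : ∀ i, 0 ≤ τ i) (hlamub : ∀ i, lam i ≤ p i / (1 - β))
    (hlam : ∀ i, 0 ≤ lam i) (hs : ∀ i, 0 ≤ m + τ i - ∑ j, x j * y i j)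
    (hc1 : ∀ i, τ i * (p i / (1 - β) - lam i) = 0)
    (hc2 : ∀ i, lam i * (m + τ i - ∑ j, x j * y i j) = 0)
    (hsum : ∑ i, lam i = 1)
    (hm : 0 ≤ m) (z : Fin k → Fin n → ℝ) (hz : ∀ i, z i = fun j => lam i * x j) :
    (x = fun l => ∑ j, z j l) ∧
    m = ∑ j, ((∑ l, z j l * y j l) - p j / (1 - β) * τ j) ∧
    (∀ i : Fin k,
      0 ≤ m + τ i - ∑ j, x j * y i j ∧
      0 ≤ (∑ l, z i l * y i l) - p i / (1 - β) * τ i ∧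
      (∑ l, z i l * y i l) - p i / (1 - β) * τ i ≤ p i / (1 - β) * m ∧
      0 ≤ τ i) := by
  have key : ∀ i, (∑ l, z i l * y i l) - p i / (1 - β) * τ i = lam i * m := by
    intro i
    have hzy : (∑ l, z i l * y i l) = lam i * ∑ l, x l * y i l := by
      rw [hz i, Finset.mul_sum]
      simp [mul_assoc]
    have h1 := hc1 i
    have h2 := hc2 i
    rw [hzy]
    nlinarith [h1, h2]
  refine ⟨?_, ?_, ?_⟩
  · funext l
    simp only [hz]
    rw [← Finset.sum_mul, hsum, one_mul]
  · have : ∑ j, ((∑ l, z j l * y j l) - p j / (1 - β) * τ j) = ∑ j, lam j * m := by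
      exact Finset.sum_congr rfl fun j _ => key j
    rw [this, ← Finset.sum_mul, hsum, one_mul]
  · intro i
    refine ⟨hs i, ?_, ?_, hτ i⟩
    · rw [key i]; exact mul_nonneg (hlam i) hm
    · rw [key i]; exact mul_le_mul_of_nonneg_right (hlamub i) hm
end

section
/- Let m_VaR ≥ 0 be the minimum value of the VaR LPEC. Then for any fixed index i0, m_VaR ≥ min(LP_I^opt, LP_II^opt, LP_III^opt), where the three values are the optimal values of the LP relaxation augmented respectively by the cuts (z^{i0}=0, τ_{i0}=0), (z^{i0} = (p_{i0}/(1-β)) x, s_{i0}=0), and (τ_{i0}=0, s_{i0}=0) (with the optimal value of an infeasible LP defined as +∞), and at least one of the three LPs is feasible. -/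
/-- if m_VaR ≥ 0 is the minimum value of the VaR LPEC, then at least one
of the three restricted LPs is feasible and m_VaR ≥ min(LP_I, LP_II, LP_III), where the
optimal value of an infeasible LP is +∞ (sInf ∅ = ⊤ in EReal). -/
theorem stmt_9
    (n k : ℕ) (X : Set (Fin n → ℝ)) (a : Fin n → ℝ)
    (ha : ∀ x ∈ X, ∀ l, |x l| ≤ a l)
    (β : ℝ) (hβ : β ∈ Set.Ioo (0:ℝ) 1)
    (p : Fin k → ℝ) (hp : ∀ i, 0 < p i) (hp1 : ∑ i, p i = 1)
    (y : Fin k → Fin n → ℝ)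
    (Feas : ℝ → (Fin n → ℝ) → (Fin k → ℝ) → (Fin k → ℝ) → Prop)
    (hFeas : ∀ m x τ lam, Feas m x τ lam ↔
      (x ∈ X ∧
       (∀ i : Fin k,
          0 ≤ τ i ∧ lam i ≤ p i / (1 - β) ∧
          0 ≤ lam i ∧ 0 ≤ m + τ i - ∑ j, x j * y i j ∧
          τ i * (p i / (1 - β) - lam i) = 0 ∧
          lam i * (m + τ i - ∑ j, x j * y i j) = 0) ∧
       ∑ i, lam i = 1))
    (RFeas : ℝ → (Fin n → ℝ) → (Fin k → Fin n → ℝ) → (Fin k → ℝ) → Prop)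
    (hRFeas : ∀ m x z τ, RFeas m x z τ ↔
      (x = (fun l => ∑ j, z j l) ∧ x ∈ X ∧
       m = ∑ j, ((∑ l, z j l * y j l) - p j / (1 - β) * τ j) ∧
       (∀ i : Fin k,
         0 ≤ m + τ i - ∑ j, x j * y i j ∧
         0 ≤ (∑ l, z i l * y i l) - p i / (1 - β) * τ i ∧
         (∑ l, z i l * y i l) - p i / (1 - β) * τ i ≤ p i / (1 - β) * m ∧
         0 ≤ τ i ∧
         (∀ l, |z i l| ≤ p i / (1 - β) * a l))))
    (i0 : Fin k)
    (vI vII vIII : EReal)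
    (hvI : vI = sInf {v : EReal | ∃ m x z τ, v = (m : ℝ) ∧ RFeas m x z τ ∧
            z i0 = 0 ∧ τ i0 = 0})
    (hvII : vII = sInf {v : EReal | ∃ m x z τ, v = (m : ℝ) ∧ RFeas m x z τ ∧
            z i0 = (fun l => p i0 / (1 - β) * x l) ∧ m + τ i0 - (∑ j, x j * y i0 j) = 0})
    (hvIII : vIII = sInf {v : EReal | ∃ m x z τ, v = (m : ℝ) ∧ RFeas m x z τ ∧
            τ i0 = 0 ∧ m + τ i0 - (∑ j, x j * y i0 j) = 0})
    (mVaR : ℝ) (hm0 : 0 ≤ mVaR)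
    (hopt : ∃ x τ lam, Feas mVaR x τ lam ∧
      ∀ m' x' τ' lam', Feas m' x' τ' lam' → mVaR ≤ m') :
    (∃ m x z τ, RFeas m x z τ ∧
       ((z i0 = 0 ∧ τ i0 = 0) ∨
        (z i0 = (fun l => p i0 / (1 - β) * x l) ∧ m + τ i0 - (∑ j, x j * y i0 j) = 0) ∨
        (τ i0 = 0 ∧ m + τ i0 - (∑ j, x j * y i0 j) = 0))) ∧
    min (min vI vII) vIII ≤ (mVaR : EReal) := by
  obtain ⟨x, τ, lam, hfe, -⟩ := hopt
  rw [hFeas] at hfe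
  obtain ⟨hxX, hi, hsum⟩ := hfe
  have hβ1 : 0 < 1 - β := by linarith [hβ.2]
  set z : Fin k → Fin n → ℝ := fun i l => lam i * x l with hz
  have key : ∀ i, lam i * (∑ j, x j * y i j) = lam i * mVaR + p i / (1-β) * τ i := by
    intro i
    obtain ⟨hτ, hle, hl0, hs, hc1, hc2⟩ := hi i
    nlinarith [hc1, hc2]
  have hzy : ∀ i, (∑ l, z i l * y i l) - p i / (1-β) * τ i = lam i * mVaR := by
    intro i
    have h2 : ∑ l, z i l * y i l = lam i * ∑ l, x l * y i l := by
      simp [hz, Finset.mul_sum, mul_assoc]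
    rw [h2, key i]; ring
  have hR : RFeas mVaR x z τ := by
    rw [hRFeas]
    refine ⟨?_, hxX, ?_, ?_⟩
    · funext l
      simp [hz, ← Finset.sum_mul, hsum]
    · rw [Finset.sum_congr rfl (fun j _ => hzy j), ← Finset.sum_mul, hsum]; ring
    · intro i
      obtain ⟨hτ, hle, hl0, hs, hc1, hc2⟩ := hi i
      refine ⟨hs, ?_, ?_, hτ, ?_⟩
      · rw [hzy i]; positivity
      · rw [hzy i]; nlinarith
      · intro l
        have hal : 0 ≤ a l := le_trans (abs_nonneg _) (ha x hxX l)
        have hxa := ha x hxX l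
        simp only [hz, abs_mul, abs_of_nonneg hl0]
        calc lam i * |x l| ≤ lam i * a l := by nlinarith
          _ ≤ p i / (1-β) * a l := by nlinarith
  have hpβ : 0 < p i0 / (1-β) := div_pos (hp i0) hβ1
  obtain ⟨hτ0, hle0, hl00, hs0, hc10, hc20⟩ := hi i0
  by_cases h0 : lam i0 = 0
  · have hτz : τ i0 = 0 := by
      have hf : p i0 / (1-β) - lam i0 > 0 := by rw [h0]; simpa using hpβ
      by_contra hne
      exact hne (by nlinarith [hc10])
    have hzI : z i0 = 0 := by funext l; simp [hz, h0]
    refine ⟨⟨mVaR, x, z, τ, hR, Or.inl ⟨hzI, hτz⟩⟩, ?_⟩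
    have hmem : (mVaR : EReal) ∈ {v : EReal | ∃ m x z τ, v = (m : ℝ) ∧ RFeas m x z τ ∧
            z i0 = 0 ∧ τ i0 = 0} := ⟨mVaR, x, z, τ, rfl, hR, hzI, hτz⟩
    calc min (min vI vII) vIII ≤ vI := le_trans (min_le_left _ _) (min_le_left _ _)
      _ ≤ (mVaR : EReal) := hvI ▸ sInf_le hmem
  · have hsz : mVaR + τ i0 - (∑ j, x j * y i0 j) = 0 := by
      rcases mul_eq_zero.mp hc20 with h | h
      · exact absurd h h0
      · exact h
    by_cases hP : lam i0 = p i0 / (1-β)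
    · have hzII : z i0 = (fun l => p i0 / (1 - β) * x l) := by
        funext l; simp [hz, hP]
      refine ⟨⟨mVaR, x, z, τ, hR, Or.inr (Or.inl ⟨hzII, hsz⟩)⟩, ?_⟩
      have hmem : (mVaR : EReal) ∈ {v : EReal | ∃ m x z τ, v = (m : ℝ) ∧ RFeas m x z τ ∧
            z i0 = (fun l => p i0 / (1 - β) * x l) ∧ m + τ i0 - (∑ j, x j * y i0 j) = 0} :=
        ⟨mVaR, x, z, τ, rfl, hR, hzII, hsz⟩
      calc min (min vI vII) vIII ≤ vII := le_trans (min_le_left _ _) (min_le_right _ _)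
        _ ≤ (mVaR : EReal) := hvII ▸ sInf_le hmem
    · have hτz : τ i0 = 0 := by
        have hf : p i0 / (1-β) - lam i0 > 0 := lt_of_le_of_ne (by linarith) (by
          intro h; exact hP (by linarith))
        by_contra hne
        exact hne (by nlinarith [hc10])
      refine ⟨⟨mVaR, x, z, τ, hR, Or.inr (Or.inr ⟨hτz, hsz⟩)⟩, ?_⟩
      have hmem : (mVaR : EReal) ∈ {v : EReal | ∃ m x z τ, v = (m : ℝ) ∧ RFeas m x z τ ∧
            τ i0 = 0 ∧ m + τ i0 - (∑ j, x j * y i0 j) = 0} :=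
        ⟨mVaR, x, z, τ, rfl, hR, hτz, hsz⟩
      calc min (min vI vII) vIII ≤ vIII := min_le_right _ _
        _ ≤ (mVaR : EReal) := hvIII ▸ sInf_le hmem
end

section
/- Suppose m_UB ≥ m_VaR ≥ 0 and the LP relaxation with the cut λ_{i0}=0 (i.e., z^{i0}=0 and τ_{i0}=0) has finite optimal value strictly greater than m_UB. Then every optimal solution (x, τ, λ) of the VaR LPEC satisfies λ_{i0} > 0 and hence s_{i0} = m_VaR + τ_{i0} - x^T y^{i0} = 0. -/
/-- if m_UB ≥ m_VaR ≥ 0 and the LP relaxation with the cut λ_(i0) = 0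
(i.e. z^(i0) = 0, τ_(i0) = 0) has finite optimal value strictly greater than m_UB, then
every optimal LPEC solution satisfies λ_(i0) > 0 and s_(i0) = 0. -/
theorem stmt_10
    (n k : ℕ) (X : Set (Fin n → ℝ)) (a : Fin n → ℝ)
    (ha : ∀ x ∈ X, ∀ l, |x l| ≤ a l)
    (β : ℝ) (hβ : β ∈ Set.Ioo (0:ℝ) 1)
    (p : Fin k → ℝ) (hp : ∀ i, 0 < p i) (hp1 : ∑ i, p i = 1)
    (y : Fin k → Fin n → ℝ)
    (Feas : ℝ → (Fin n → ℝ) → (Fin k → ℝ) → (Fin k → ℝ) → Prop)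
    (hFeas : ∀ m x τ lam, Feas m x τ lam ↔
      (x ∈ X ∧
       (∀ i : Fin k,
          0 ≤ τ i ∧ lam i ≤ p i / (1 - β) ∧
          0 ≤ lam i ∧ 0 ≤ m + τ i - ∑ j, x j * y i j ∧
          τ i * (p i / (1 - β) - lam i) = 0 ∧
          lam i * (m + τ i - ∑ j, x j * y i j) = 0) ∧
       ∑ i, lam i = 1))
    (RFeas : ℝ → (Fin n → ℝ) → (Fin k → Fin n → ℝ) → (Fin k → ℝ) → Prop)
    (hRFeas : ∀ m x z τ, RFeas m x z τ ↔
      (x = (fun l => ∑ j, z j l) ∧ x ∈ X ∧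
       m = ∑ j, ((∑ l, z j l * y j l) - p j / (1 - β) * τ j) ∧
       (∀ i : Fin k,
         0 ≤ m + τ i - ∑ j, x j * y i j ∧
         0 ≤ (∑ l, z i l * y i l) - p i / (1 - β) * τ i ∧
         (∑ l, z i l * y i l) - p i / (1 - β) * τ i ≤ p i / (1 - β) * m ∧
         0 ≤ τ i ∧
         (∀ l, |z i l| ≤ p i / (1 - β) * a l))))
    (i0 : Fin k)
    (vI : EReal)
    (hvI : vI = sInf {v : EReal | ∃ m x z τ, v = (m : ℝ) ∧ RFeas m x z τ ∧
            z i0 = 0 ∧ τ i0 = 0})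
    (mVaR mUB : ℝ) (hm0 : 0 ≤ mVaR) (hUB : mVaR ≤ mUB)
    (hopt : ∀ m' x' τ' lam', Feas m' x' τ' lam' → mVaR ≤ m')
    (hfin : vI ≠ ⊤) (hgt : (mUB : EReal) < vI) :
    ∀ x τ lam, Feas mVaR x τ lam →
      0 < lam i0 ∧ mVaR + τ i0 - (∑ j, x j * y i0 j) = 0 := by
  intro x τ lam hF
  rw [hFeas] at hF
  obtain ⟨hxX, hi, hsum⟩ := hF
  have hβ1 : 0 < 1 - β := by linarith [hβ.2]
  have hlam0 : lam i0 ≠ 0 := by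
    intro h0
    have hτ0 : τ i0 = 0 := by
      have hc := (hi i0).2.2.2.2.1
      have hp0 : 0 < p i0 / (1 - β) := div_pos (hp i0) hβ1
      rcases mul_eq_zero.mp hc with h | h
      · exact h
      · rw [h0] at h; linarith
    have hterm : ∀ j, (∑ l, (lam j * x l) * y j l) - p j / (1 - β) * τ j = lam j * mVaR := by
      intro j
      have h1 := (hi j).2.2.2.2.1
      have h2 := (hi j).2.2.2.2.2
      have hs : ∑ l, lam j * x l * y j l = lam j * ∑ l, x l * y j l := by
        rw [Finset.mul_sum]; exact Finset.sum_congr rfl (fun l _ => by ring)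
      rw [hs]; nlinarith [h1, h2]
    have hR : RFeas mVaR x (fun i l => lam i * x l) τ := by
      rw [hRFeas]
      refine ⟨?_, hxX, ?_, ?_⟩
      · funext l
        rw [← Finset.sum_mul, hsum, one_mul]
      · rw [Finset.sum_congr rfl (fun j _ => hterm j), ← Finset.sum_mul, hsum, one_mul]
      · intro i
        obtain ⟨hτ, hlamle, hlamnn, hslack, hc1, hc2⟩ := hi i
        refine ⟨hslack, ?_, ?_, hτ, ?_⟩
        · rw [hterm i]; exact mul_nonneg hlamnn hm0
        · rw [hterm i]; exact mul_le_mul_of_nonneg_right hlamle hm0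
        · intro l
          have hxa := ha x hxX l
          have habs : |lam i * x l| = lam i * |x l| := by
            rw [abs_mul, abs_of_nonneg hlamnn]
          rw [habs]
          exact mul_le_mul hlamle hxa (abs_nonneg _) (le_of_lt (div_pos (hp i) hβ1))
    have hmem : (mVaR : EReal) ∈ {v : EReal | ∃ m x z τ, v = (m : ℝ) ∧ RFeas m x z τ ∧
            z i0 = 0 ∧ τ i0 = 0} :=
      ⟨mVaR, x, fun i l => lam i * x l, τ, rfl, hR, by funext l; simp [h0], hτ0⟩
    have hle : vI ≤ (mVaR : EReal) := hvI ▸ sInf_le hmem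
    have hle2 : (mVaR : EReal) ≤ (mUB : EReal) := EReal.coe_le_coe_iff.mpr hUB
    exact absurd hgt (not_lt.mpr (hle.trans hle2))
  have hlampos : 0 < lam i0 := lt_of_le_of_ne (hi i0).2.2.1 (Ne.symm hlam0)
  refine ⟨hlampos, ?_⟩
  rcases mul_eq_zero.mp (hi i0).2.2.2.2.2 with h | h
  · exact absurd h hlam0
  · exact h
end

section
/- Let ε_ν ↓ 0 and x^ν ∈ X with X compact, and let m_ν be the minimizer of m ↦ m + (1/(1-β)) Σ_i p_i ρ_{ε_ν}((x^ν)^T y^i - m), where |max(0,t) - ρ_ε(t)| ≤ cε uniformly in t. Then the sequence {m_ν} is bounded, and if (m_ν, x^ν) converges along a subsequence to (m_∞, x_∞), then m_∞ minimizes m ↦ m + (1/(1-β)) Σ_i p_i max(0, x_∞^T y^i - m) over m ∈ R. -/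
/-- boundedness lemma: if ε_ν ↓ 0, x^ν ∈ X with X compact, and m_ν
minimizes the ε_ν-smoothed CVaR minimand at x^ν (the smoothing satisfying the uniform
approximation |t_+ - ρ_ε(t)| ≤ cε), then {m_ν} is bounded, and every subsequential
limit (m_∞, x_∞) has m_∞ minimizing the hinge-loss CVaR minimand at x_∞. -/
theorem stmt_18
    (n k : ℕ) (β : ℝ) (hβ : β ∈ Set.Ioo (0:ℝ) 1)
    (p : Fin k → ℝ) (hp : ∀ i, 0 < p i) (hp1 : ∑ i, p i = 1)
    (y : Fin k → Fin n → ℝ)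
    (X : Set (Fin n → ℝ)) (hX : IsCompact X)
    (c : ℝ) (hc : 0 < c)
    (ρ : ℝ → ℝ → ℝ)
    (happrox : ∀ e : ℝ, 0 < e → ∀ t : ℝ, |max 0 t - ρ e t| ≤ c * e)
    (ε : ℕ → ℝ) (hεpos : ∀ ν, 0 < ε ν)
    (hεto0 : Filter.Tendsto ε Filter.atTop (nhds 0))
    (xs : ℕ → Fin n → ℝ) (hxs : ∀ ν, xs ν ∈ X)
    (ms : ℕ → ℝ)
    (hmin : ∀ ν : ℕ, ∀ m : ℝ,
      ms ν + (1 / (1 - β)) * ∑ i, p i * ρ (ε ν) ((∑ j, xs ν j * y i j) - ms ν) ≤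
      m + (1 / (1 - β)) * ∑ i, p i * ρ (ε ν) ((∑ j, xs ν j * y i j) - m)) :
    (∃ B : ℝ, ∀ ν, |ms ν| ≤ B) ∧
    (∀ (φ : ℕ → ℕ), StrictMono φ →
      ∀ (minf : ℝ) (xinf : Fin n → ℝ),
        Filter.Tendsto (fun ν => ms (φ ν)) Filter.atTop (nhds minf) →
        Filter.Tendsto (fun ν => xs (φ ν)) Filter.atTop (nhds xinf) →
        ∀ m : ℝ,
          minf + (1 / (1 - β)) * ∑ i, p i * max 0 ((∑ j, xinf j * y i j) - minf) ≤
          m + (1 / (1 - β)) * ∑ i, p i * max 0 ((∑ j, xinf j * y i j) - m)) := by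
  obtain ⟨hβ0, hβ1⟩ := hβ
  have h1β : (0:ℝ) < 1 - β := by linarith
  set K : ℝ := 1 / (1 - β) with hKdef
  have hKpos : 0 < K := by positivity
  have hK1 : 1 < K := by
    rw [hKdef, lt_div_iff₀ h1β]; linarith
  -- the key inequality with hinge loss
  have hkey : ∀ ν (m : ℝ),
      ms ν + K * ∑ i, p i * max 0 ((∑ j, xs ν j * y i j) - ms ν) ≤
      m + K * ∑ i, p i * max 0 ((∑ j, xs ν j * y i j) - m) + 2 * (K * (c * ε ν)) := by
    intro ν m
    have hε := hεpos ν
    have hsum1 : ∑ i, p i * max 0 ((∑ j, xs ν j * y i j) - ms ν) ≤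
        (∑ i, p i * ρ (ε ν) ((∑ j, xs ν j * y i j) - ms ν)) + c * ε ν := by
      calc ∑ i, p i * max 0 ((∑ j, xs ν j * y i j) - ms ν)
          ≤ ∑ i, p i * (ρ (ε ν) ((∑ j, xs ν j * y i j) - ms ν) + c * ε ν) := by
            apply Finset.sum_le_sum
            intro i _
            have h := abs_le.mp (happrox (ε ν) hε ((∑ j, xs ν j * y i j) - ms ν))
            exact mul_le_mul_of_nonneg_left (by linarith [h.2]) (hp i).le
        _ = (∑ i, p i * ρ (ε ν) ((∑ j, xs ν j * y i j) - ms ν)) + c * ε ν := by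
            simp [mul_add, Finset.sum_add_distrib, ← Finset.sum_mul, hp1]
    have hsum2 : ∑ i, p i * ρ (ε ν) ((∑ j, xs ν j * y i j) - m) ≤
        (∑ i, p i * max 0 ((∑ j, xs ν j * y i j) - m)) + c * ε ν := by
      calc ∑ i, p i * ρ (ε ν) ((∑ j, xs ν j * y i j) - m)
          ≤ ∑ i, p i * (max 0 ((∑ j, xs ν j * y i j) - m) + c * ε ν) := by
            apply Finset.sum_le_sum
            intro i _
            have h := abs_le.mp (happrox (ε ν) hε ((∑ j, xs ν j * y i j) - m))
            exact mul_le_mul_of_nonneg_left (by linarith [h.1]) (hp i).le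
        _ = (∑ i, p i * max 0 ((∑ j, xs ν j * y i j) - m)) + c * ε ν := by
            simp [mul_add, Finset.sum_add_distrib, ← Finset.sum_mul, hp1]
    have a1 := mul_le_mul_of_nonneg_left hsum1 hKpos.le
    have a2 := mul_le_mul_of_nonneg_left hsum2 hKpos.le
    rw [mul_add] at a1 a2
    have h := hmin ν m
    linarith
  -- uniform bound on the scenario returns over X
  obtain ⟨r, hr⟩ := hX.exists_bound_of_continuousOn continuousOn_id
  have hr' : ∀ x ∈ X, ∀ j, |x j| ≤ max r 0 := by
    intro x hx j
    have h1 : ‖x j‖ ≤ ‖x‖ := norm_le_pi_norm x j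
    have h2 := hr x hx
    simp only [id] at h2
    calc |x j| = ‖x j‖ := (Real.norm_eq_abs _).symm
      _ ≤ ‖x‖ := h1
      _ ≤ r := h2
      _ ≤ max r 0 := le_max_left _ _
  set M : ℝ := (max r 0) * ∑ i, ∑ j, |y i j| with hMdef
  have hM0 : 0 ≤ M := by
    apply mul_nonneg (le_max_right _ _)
    exact Finset.sum_nonneg fun i _ => Finset.sum_nonneg fun j _ => abs_nonneg _
  have ht : ∀ ν i, |∑ j, xs ν j * y i j| ≤ M := by
    intro ν i
    calc |∑ j, xs ν j * y i j| ≤ ∑ j, |xs ν j * y i j| := Finset.abs_sum_le_sum_abs _ _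
      _ ≤ ∑ j, (max r 0) * |y i j| := by
          apply Finset.sum_le_sum
          intro j _
          rw [abs_mul]
          exact mul_le_mul_of_nonneg_right (hr' _ (hxs ν) j) (abs_nonneg _)
      _ = (max r 0) * ∑ j, |y i j| := by rw [Finset.mul_sum]
      _ ≤ M :=
          mul_le_mul_of_nonneg_left
            (Finset.single_le_sum
              (f := fun i => ∑ j, |y i j|)
              (fun i _ => Finset.sum_nonneg fun j _ => abs_nonneg _) (Finset.mem_univ i))
            (le_max_right _ _)
  -- bound on ε
  obtain ⟨E, hE⟩ := hεto0.bddAbove_range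
  have hE' : ∀ ν, ε ν ≤ E := fun ν => hE ⟨ν, rfl⟩
  have hEpos : 0 < E := lt_of_lt_of_le (hεpos 0) (hE' 0)
  constructor
  · -- boundedness
    set C : ℝ := K * M + 2 * (K * (c * E)) with hCdef
    set D : ℝ := (C + K * M) / (1 - K) with hDdef
    refine ⟨max C (-D), fun ν => ?_⟩
    have hkey0 := hkey ν 0
    have hS1nonneg : 0 ≤ ∑ i, p i * max 0 ((∑ j, xs ν j * y i j) - ms ν) :=
      Finset.sum_nonneg fun i _ => mul_nonneg (hp i).le (le_max_left _ _)
    have hS0le : ∑ i, p i * max 0 ((∑ j, xs ν j * y i j) - 0) ≤ M := by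
      calc ∑ i, p i * max 0 ((∑ j, xs ν j * y i j) - 0)
          ≤ ∑ i, p i * M := by
            apply Finset.sum_le_sum
            intro i _
            apply mul_le_mul_of_nonneg_left _ (hp i).le
            have := abs_le.mp (ht ν i)
            simp only [sub_zero]
            exact max_le hM0 (by linarith [this.2])
        _ = M := by rw [← Finset.sum_mul, hp1, one_mul]
    have hεle : K * (c * ε ν) ≤ K * (c * E) :=
      mul_le_mul_of_nonneg_left (mul_le_mul_of_nonneg_left (hE' ν) hc.le) hKpos.le
    -- upper bound
    have hub : ms ν ≤ C := by
      have h1 : K * ∑ i, p i * max 0 ((∑ j, xs ν j * y i j) - 0) ≤ K * M :=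
        mul_le_mul_of_nonneg_left hS0le hKpos.le
      nlinarith [mul_nonneg hKpos.le hS1nonneg]
    -- lower bound
    have hS1low : ∑ i, p i * ((∑ j, xs ν j * y i j) - ms ν) ≤
        ∑ i, p i * max 0 ((∑ j, xs ν j * y i j) - ms ν) := by
      apply Finset.sum_le_sum
      intro i _
      exact mul_le_mul_of_nonneg_left (le_max_right _ _) (hp i).le
    have hS1low2 : -M - ms ν ≤ ∑ i, p i * ((∑ j, xs ν j * y i j) - ms ν) := by
      have : ∑ i, p i * ((∑ j, xs ν j * y i j) - ms ν) =
          (∑ i, p i * (∑ j, xs ν j * y i j)) - ms ν := by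
        simp [mul_sub, Finset.sum_sub_distrib, ← Finset.sum_mul, hp1]
      rw [this]
      have : -M ≤ ∑ i, p i * (∑ j, xs ν j * y i j) := by
        calc -M = ∑ i, p i * (-M) := by rw [← Finset.sum_mul, hp1, one_mul]
          _ ≤ ∑ i, p i * (∑ j, xs ν j * y i j) := by
              apply Finset.sum_le_sum
              intro i _
              apply mul_le_mul_of_nonneg_left _ (hp i).le
              linarith [(abs_le.mp (ht ν i)).1]
      linarith
    have hlb : D ≤ ms ν := by
      rw [hDdef, div_le_iff_of_neg (by linarith : 1 - K < 0)]
      have h1 : K * ∑ i, p i * max 0 ((∑ j, xs ν j * y i j) - 0) ≤ K * M :=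
        mul_le_mul_of_nonneg_left hS0le hKpos.le
      have h2 : K * (-M - ms ν) ≤ K * ∑ i, p i * max 0 ((∑ j, xs ν j * y i j) - ms ν) :=
        mul_le_mul_of_nonneg_left (le_trans hS1low2 hS1low) hKpos.le
      nlinarith
    rw [abs_le]
    constructor
    · have := neg_le_neg (le_max_right C (-D))
      simpa using le_trans (by simpa using this) hlb
    · exact le_trans hub (le_max_left _ _)
  · -- subsequential limits
    intro φ hφ minf xinf hm hx m
    have htend : ∀ i, Filter.Tendsto (fun ν => ∑ j, xs (φ ν) j * y i j)
        Filter.atTop (nhds (∑ j, xinf j * y i j)) := by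
      intro i
      apply tendsto_finset_sum
      intro j _
      exact (Filter.Tendsto.mul_const _ (tendsto_pi_nhds.mp hx j))
    have hεφ : Filter.Tendsto (fun ν => ε (φ ν)) Filter.atTop (nhds 0) :=
      hεto0.comp hφ.tendsto_atTop
    have hL : Filter.Tendsto
        (fun ν => ms (φ ν) + K * ∑ i, p i * max 0 ((∑ j, xs (φ ν) j * y i j) - ms (φ ν)))
        Filter.atTop
        (nhds (minf + K * ∑ i, p i * max 0 ((∑ j, xinf j * y i j) - minf))) := by
      apply hm.add
      apply Filter.Tendsto.const_mul
      apply tendsto_finset_sum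
      intro i _
      exact Filter.Tendsto.const_mul _ (tendsto_const_nhds.max ((htend i).sub hm))
    have hR : Filter.Tendsto
        (fun ν => m + K * ∑ i, p i * max 0 ((∑ j, xs (φ ν) j * y i j) - m)
          + 2 * (K * (c * ε (φ ν))))
        Filter.atTop
        (nhds (m + K * ∑ i, p i * max 0 ((∑ j, xinf j * y i j) - m))) := by
      have h0 : Filter.Tendsto (fun ν => 2 * (K * (c * ε (φ ν)))) Filter.atTop (nhds 0) := by
        have := ((hεφ.const_mul c).const_mul K).const_mul 2
        simpa using this
      have hmain : Filter.Tendsto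
          (fun ν => m + K * ∑ i, p i * max 0 ((∑ j, xs (φ ν) j * y i j) - m))
          Filter.atTop
          (nhds (m + K * ∑ i, p i * max 0 ((∑ j, xinf j * y i j) - m))) := by
        apply tendsto_const_nhds.add
        apply Filter.Tendsto.const_mul
        apply tendsto_finset_sum
        intro i _
        exact Filter.Tendsto.const_mul _ (tendsto_const_nhds.max ((htend i).sub tendsto_const_nhds))
      simpa using hmain.add h0
    exact le_of_tendsto_of_tendsto' hL hR (fun ν => hkey (φ ν) m)
end

section
/- Suppose the VaR minimization problem min_{x∈X} VaR_β(x) has a minimizer x* such that the argmin set M_β(x*) of m ↦ m + (1/(1-β)) Σ_i p_i (x*^T y^i - m)_+ is a singleton {m*}. For each ε > 0 let x^ε minimize VaR_{β,ε} over X and set m_ε = VaR_{β,ε}(x^ε). Then lim_{ε↓0} m_ε = m* = min_{x∈X} VaR_β(x), and every accumulation point of {x^{ε_ν}} for ε_ν ↓ 0 is a minimizer of VaR_β over X. -/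
/-!
The smoothed minimand differs from `F x m = m + γ ∑ pᵢ (xᵀyⁱ - m)₊` (`γ = 1/(1-β)`) by at most
`γcε` uniformly, so `VaR_{β,ε}(x)` is a `2γcε`-approximate minimizer of `F x`. Since `F x*` is
convex with the unique minimizer `m*`, such approximate minimizers converge to `m*`, which gives
the upper bound `m_ε ≤ VaR_{β,ε}(x*) → m*`. For the lower bound, `F` is continuous and, as
`γ > 1`, coercive in `m` uniformly on the compact set `X`; so along any ultrafilter
`(x^ε, m_ε)` converges to some `(x, m)` with `x ∈ X` and `m` an exact minimizer of `F x`,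
whence `m ≥ m*`. The same limit argument at a cluster point `x` of `x^{ε_ν}` shows `m* ∈ M(x)`.
-/

open Filter Set Topology Function

def minimizers {α β : Type*} [Preorder β] (f : α → β) : Set α := {a | ∀ a', f a ≤ f a'}

section ConvexSum

variable {𝕜 E β ι : Type*} [Semiring 𝕜] [PartialOrder 𝕜] [AddCommMonoid E] [SMul 𝕜 E]
  [AddCommMonoid β] [PartialOrder β] [IsOrderedAddMonoid β] [Module 𝕜 β] {s : Set E}

theorem ConvexOn.finsetSum (hs : Convex 𝕜 s) (t : Finset ι) {f : ι → E → β}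
    (hf : ∀ i ∈ t, ConvexOn 𝕜 s (f i)) : ConvexOn 𝕜 s fun x => ∑ i ∈ t, f i x := by
  convert Finset.sum_induction f (ConvexOn 𝕜 s) (fun _ _ => ConvexOn.add)
    (convexOn_const (0 : β) hs) hf using 1
  ext x
  simp [Finset.sum_apply]

end ConvexSum

theorem le_add_two_mul_of_abs_sub_le {β : Type*} {f g : β → ℝ} {a : β} {ε : ℝ}
    (hfg : ∀ b, |f b - g b| ≤ ε) (ha : ∀ b, g a ≤ g b) (b : β) : f a ≤ f b + 2 * ε := by
  have h₁ := abs_le.mp (hfg a)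
  have h₂ := abs_le.mp (hfg b)
  linarith [ha b]

theorem ConvexOn.tendsto_of_le_add {ι : Type*} {l : Filter ι} {f : ℝ → ℝ} {m₀ : ℝ}
    {v δ : ι → ℝ} (hf : ConvexOn ℝ univ f) (hmin : minimizers f = {m₀})
    (hδ : Tendsto δ l (𝓝 0)) (hv : ∀ᶠ i in l, f (v i) ≤ f m₀ + δ i) : Tendsto v l (𝓝 m₀) := by
  have hm₀ : ∀ m', f m₀ ≤ f m' := hmin.ge rfl
  have hlt : ∀ m ≠ m₀, f m₀ < f m := fun m hm => by
    by_contra! hle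
    exact hm (hmin.le fun m' => hle.trans (hm₀ m'))
  -- once `δ i < f a - f m₀`, convexity keeps `a` off the segment between `v i` and `m₀`
  have hoff : ∀ a ≠ m₀, ∀ᶠ i in l, a ∉ Icc (min (v i) m₀) (max (v i) m₀) := by
    intro a ha
    filter_upwards [hv, hδ.eventually (gt_mem_nhds (sub_pos.2 (hlt a ha)))] with i hvi hδi hseg
    rw [← segment_eq_Icc'] at hseg
    have := hf.le_on_segment (mem_univ _) (mem_univ _) hseg
    exact (max_lt (by linarith) (hlt a ha)).not_ge this
  refine tendsto_order.2 ⟨fun a ha => ?_, fun b hb => ?_⟩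
  · filter_upwards [hoff a ha.ne] with i hi
    by_contra! h
    exact hi ⟨min_le_of_left_le h, le_max_of_le_right ha.le⟩
  · filter_upwards [hoff b hb.ne'] with i hi
    by_contra! h
    exact hi ⟨min_le_of_right_le hb.le, le_max_of_le_left h⟩

theorem mem_minimizers_of_tendsto {α ι : Type*} [TopologicalSpace α] {F : α → ℝ → ℝ}
    (hF : Continuous (uncurry F)) {l : Filter ι} [l.NeBot] {u : ι → α} {v δ : ι → ℝ} {x : α}
    {m : ℝ} (hu : Tendsto u l (𝓝 x)) (hv : Tendsto v l (𝓝 m)) (hδ : Tendsto δ l (𝓝 0))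
    (happrox : ∀ᶠ i in l, ∀ m', F (u i) (v i) ≤ F (u i) m' + δ i) : m ∈ minimizers (F x) := by
  intro m'
  have hlhs : Tendsto (fun i => F (u i) (v i)) l (𝓝 (F x m)) :=
    (hF.tendsto (x, m)).comp (hu.prodMk_nhds hv)
  have hrhs : Tendsto (fun i => F (u i) m' + δ i) l (𝓝 (F x m' + 0)) :=
    ((hF.tendsto (x, m')).comp (hu.prodMk_nhds tendsto_const_nhds)).add hδ
  simpa using le_of_tendsto_of_tendsto hlhs hrhs (happrox.mono fun i h => h m')

section ApproxMin

variable {α ι : Type*} [TopologicalSpace α] {F : α → ℝ → ℝ} {X : Set α} {x₀ : α} {m₀ : ℝ}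
  {l : Filter ι} {δ : ι → ℝ} {V : ι → α → ℝ} {u : ι → α}

theorem tendsto_approxMin_of_isCompact (hX : IsCompact X) (hF : Continuous (uncurry F))
    (hconv : ConvexOn ℝ univ (F x₀)) (hmin : minimizers (F x₀) = {m₀})
    (hopt : ∀ x ∈ X, ∀ m ∈ minimizers (F x), m₀ ≤ m)
    (hcoer : ∀ B, ∃ b, ∀ x ∈ X, ∀ m, F x m ≤ B → b ≤ m)
    (hδ : Tendsto δ l (𝓝 0)) (happrox : ∀ᶠ i in l, ∀ x m, F x (V i x) ≤ F x m + δ i)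
    (hu : ∀ᶠ i in l, u i ∈ X ∧ V i (u i) ≤ V i x₀) :
    Tendsto (fun i => V i (u i)) l (𝓝 m₀) := by
  have hV₀ : Tendsto (fun i => V i x₀) l (𝓝 m₀) :=
    hconv.tendsto_of_le_add hmin hδ (happrox.mono fun i h => h x₀ m₀)
  obtain ⟨K, hK⟩ := (hX.image (hF.comp (continuous_id.prodMk continuous_const))).bddAbove
  obtain ⟨b, hb⟩ := hcoer (K + 1)
  have hbound : ∀ᶠ i in l, V i (u i) ∈ Icc b (m₀ + 1) := by
    filter_upwards [hu, happrox, hV₀.eventually (gt_mem_nhds (lt_add_one m₀)),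
      hδ.eventually (gt_mem_nhds one_pos)] with i ⟨hui, hle⟩ hi hV hδi
    have hKi : F (u i) m₀ ≤ K := hK (mem_image_of_mem _ hui)
    exact ⟨hb _ hui _ (by linarith [hi (u i) m₀]), hle.trans hV.le⟩
  refine (tendsto_iff_ultrafilter _ _ _).2 fun U hU => ?_
  obtain ⟨m, -, hm⟩ := isCompact_Icc.ultrafilter_le_nhds' (U.map fun i => V i (u i)) (hU hbound)
  obtain ⟨x, hxX, hx⟩ := hX.ultrafilter_le_nhds' (U.map u) (hU (hu.mono fun i h => h.1))
  have hle : m ≤ m₀ :=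
    le_of_tendsto_of_tendsto hm (hV₀.mono_left hU) ((hu.filter_mono hU).mono fun i h => h.2)
  have hge : m₀ ≤ m := hopt x hxX m <| mem_minimizers_of_tendsto hF hx hm
    (hδ.mono_left hU) ((happrox.filter_mono hU).mono fun i h => h (u i))
  rwa [← le_antisymm hle hge]

theorem mem_and_sInf_minimizers_le_of_mapClusterPt [T2Space α] (hX : IsCompact X)
    (hF : Continuous (uncurry F)) (hconv : ConvexOn ℝ univ (F x₀))
    (hmin : minimizers (F x₀) = {m₀})
    (hopt : ∀ x ∈ X, ∀ m ∈ minimizers (F x), m₀ ≤ m)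
    (hcoer : ∀ B, ∃ b, ∀ x ∈ X, ∀ m, F x m ≤ B → b ≤ m)
    (hδ : Tendsto δ l (𝓝 0)) (happrox : ∀ᶠ i in l, ∀ x m, F x (V i x) ≤ F x m + δ i)
    (hu : ∀ᶠ i in l, u i ∈ X ∧ V i (u i) ≤ V i x₀) {x : α} (hx : MapClusterPt x l u) :
    x ∈ X ∧ sInf (minimizers (F x)) ≤ m₀ := by
  have hm := tendsto_approxMin_of_isCompact hX hF hconv hmin hopt hcoer hδ happrox hu
  obtain ⟨U, hU, hux⟩ := mapClusterPt_iff_ultrafilter.mp hx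
  have hxX : x ∈ X := hX.isClosed.mem_of_mapClusterPt hx (hu.mono fun i h => h.1)
  have hm₀ : m₀ ∈ minimizers (F x) := mem_minimizers_of_tendsto hF hux (hm.mono_left hU)
    (hδ.mono_left hU) ((happrox.filter_mono hU).mono fun i h => h (u i))
  obtain ⟨b, hb⟩ := hcoer (F x m₀)
  exact ⟨hxX, csInf_le ⟨b, fun m hm => hb x hxX m (hm m₀)⟩ hm₀⟩

end ApproxMin

section CVaR

variable {ι : Type*} [Fintype ι] {φ ψ : ℝ → ℝ} {γ : ℝ} {p : ι → ℝ}

/-- With `γ = 1/(1-β)`, `zᵢ = xᵀyⁱ` and `φ = max 0` (resp. `φ = ρ ε`), this is the CVaR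
minimand `f x` (resp. its smoothing `g ε x`). -/
def cvarObjective (φ : ℝ → ℝ) (γ : ℝ) (p z : ι → ℝ) (m : ℝ) : ℝ :=
  m + γ * ∑ i, p i * φ (z i - m)

theorem abs_cvarObjective_sub_le (hp : ∀ i, 0 ≤ p i) (hp1 : ∑ i, p i = 1) (hγ : 0 ≤ γ)
    {ε : ℝ} (hφψ : ∀ t, |φ t - ψ t| ≤ ε) (z : ι → ℝ) (m : ℝ) :
    |cvarObjective φ γ p z m - cvarObjective ψ γ p z m| ≤ γ * ε := by
  have hsum : |∑ i, p i * (φ (z i - m) - ψ (z i - m))| ≤ ε := calc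
    _ ≤ ∑ i, |p i * (φ (z i - m) - ψ (z i - m))| := Finset.abs_sum_le_sum_abs _ _
    _ ≤ ∑ i, p i * ε := Finset.sum_le_sum fun i _ => by
      rw [abs_mul, abs_of_nonneg (hp i)]
      exact mul_le_mul_of_nonneg_left (hφψ _) (hp i)
    _ = ε := by rw [← Finset.sum_mul, hp1, one_mul]
  simp only [cvarObjective, add_sub_add_left_eq_sub, ← mul_sub, ← Finset.sum_sub_distrib,
    abs_mul, abs_of_nonneg hγ]
  exact mul_le_mul_of_nonneg_left hsum hγ

theorem convexOn_cvarObjective (hφ : ConvexOn ℝ univ φ) (hγ : 0 ≤ γ) (hp : ∀ i, 0 ≤ p i)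
    (z : ι → ℝ) : ConvexOn ℝ univ (cvarObjective φ γ p z) :=
  (convexOn_id convex_univ).add <| (ConvexOn.finsetSum convex_univ _ fun i _ =>
    (hφ.comp_affineMap (AffineMap.const ℝ ℝ (z i) - AffineMap.id ℝ ℝ)).smul (hp i)).smul hγ

theorem continuous_cvarObjective (hφ : Continuous φ) :
    Continuous fun q : (ι → ℝ) × ℝ => cvarObjective φ γ p q.1 q.2 := by
  unfold cvarObjective
  fun_prop

theorem exists_forall_le_of_cvarObjective_le {α : Type*} [TopologicalSpace α] {X : Set α}
    (hX : IsCompact X) {L : α → ι → ℝ} (hL : Continuous L) (hφ : ∀ t, t ≤ φ t)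
    (hp : ∀ i, 0 ≤ p i) (hp1 : ∑ i, p i = 1) (hγ : 1 < γ) (B : ℝ) :
    ∃ b, ∀ x ∈ X, ∀ m, cvarObjective φ γ p (L x) m ≤ B → b ≤ m := by
  obtain ⟨s, hs⟩ := (hX.image (by fun_prop : Continuous fun x => ∑ i, p i * L x i)).bddBelow
  refine ⟨(γ * s - B) / (γ - 1), fun x hx m hB => ?_⟩
  have hmean : s - m ≤ ∑ i, p i * φ (L x i - m) := calc
    _ ≤ ∑ i, p i * L x i - m := by linarith [hs (mem_image_of_mem _ hx)]
    _ = ∑ i, p i * (L x i - m) := by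
      simp only [mul_sub, Finset.sum_sub_distrib, ← Finset.sum_mul, hp1, one_mul]
    _ ≤ _ := Finset.sum_le_sum fun i _ => mul_le_mul_of_nonneg_left (hφ _) (hp i)
  rw [div_le_iff₀ (by linarith)]
  unfold cvarObjective at hB
  nlinarith [mul_le_mul_of_nonneg_left hmean (by linarith : (0:ℝ) ≤ γ)]

end CVaR

theorem stmt_19_general
    (n k : ℕ) (β : ℝ) (hβ : β ∈ Set.Ioo (0:ℝ) 1)
    (p : Fin k → ℝ) (hp : ∀ i, 0 < p i) (hp1 : ∑ i, p i = 1)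
    (y : Fin k → Fin n → ℝ)
    (X : Set (Fin n → ℝ)) (hX : IsCompact X)
    -- the discretized CVaR minimand and its argmin set
    (f : (Fin n → ℝ) → ℝ → ℝ)
    (hf : f = fun x m => m + (1 / (1 - β)) * ∑ i, p i * max 0 ((∑ j, x j * y i j) - m))
    (M : (Fin n → ℝ) → Set ℝ)
    (hM : M = fun x => {m | ∀ m' : ℝ, f x m ≤ f x m'})
    -- the smoothing family and the smoothed minimand
    (c : ℝ)
    (ρ : ℝ → ℝ → ℝ)
    (happrox : ∀ e, 0 < e → ∀ t, |max 0 t - ρ e t| ≤ c * e)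
    (g : ℝ → (Fin n → ℝ) → ℝ → ℝ)
    (hg : g = fun e x m =>
      m + (1 / (1 - β)) * ∑ i, p i * ρ e ((∑ j, x j * y i j) - m))
    -- VaR_{β,ε}(x): the unique minimizer of the smoothed minimand
    (V : ℝ → (Fin n → ℝ) → ℝ)
    (hVmin : ∀ e, 0 < e → ∀ x, ∀ m : ℝ, g e x (V e x) ≤ g e x m)
    -- the minimizer x* of VaR_β over X, with singleton argmin set {m*}
    (xstar : Fin n → ℝ) (mstar : ℝ)
    (hxstar : xstar ∈ X) (hMstar : M xstar = {mstar})
    (hVaRmin : ∀ x ∈ X, ∀ mx ∈ M x, mstar ≤ mx)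
    -- for each ε > 0, x^ε globally minimizes V ε over X
    (xε : ℝ → Fin n → ℝ)
    (hxε : ∀ e, 0 < e → xε e ∈ X ∧ ∀ x' ∈ X, V e (xε e) ≤ V e x') :
    Filter.Tendsto (fun e => V e (xε e)) (nhdsWithin 0 (Set.Ioi 0)) (nhds mstar) ∧
    (∀ εν : ℕ → ℝ, (∀ ν, 0 < εν ν) →
      Filter.Tendsto εν Filter.atTop (nhds 0) →
      ∀ xinf : Fin n → ℝ,
        MapClusterPt xinf Filter.atTop (fun ν => xε (εν ν)) →
        xinf ∈ X ∧ ∀ x' ∈ X, ∀ m' ∈ M x', sInf (M xinf) ≤ m') := by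
  obtain ⟨hβ0, hβ1⟩ := hβ
  set γ := 1 / (1 - β)
  have hγ : 1 < γ := by rw [lt_div_iff₀ (by linarith)]; linarith
  have hp₀ : ∀ i, 0 ≤ p i := fun i => (hp i).le
  set L : (Fin n → ℝ) → Fin k → ℝ := fun x i => ∑ j, x j * y i j
  have hL : Continuous L := by fun_prop
  obtain rfl : f = fun x => cvarObjective (max 0) γ p (L x) := hf
  obtain rfl : g = fun e x => cvarObjective (ρ e) γ p (L x) := hg
  subst hM
  set F : (Fin n → ℝ) → ℝ → ℝ := fun x => cvarObjective (max 0) γ p (L x)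
  have hF : Continuous (uncurry F) :=
    (continuous_cvarObjective (by fun_prop)).comp (hL.prodMap continuous_id)
  have hconv : ConvexOn ℝ univ (F xstar) := convexOn_cvarObjective
    ((convexOn_const 0 convex_univ).sup (convexOn_id convex_univ)) (by linarith) hp₀ _
  have hcoer : ∀ B, ∃ b, ∀ x ∈ X, ∀ m, F x m ≤ B → b ≤ m :=
    exists_forall_le_of_cvarObjective_le hX hL (le_max_right 0) hp₀ hp1 hγ
  have hpos : ∀ᶠ e in 𝓝[>] (0 : ℝ), 0 < e := self_mem_nhdsWithin
  have hδ : Tendsto (fun e => 2 * (γ * (c * e))) (𝓝[>] 0) (𝓝 0) := by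
    refine tendsto_nhdsWithin_of_tendsto_nhds ?_
    simpa using (by fun_prop : Continuous fun e : ℝ => 2 * (γ * (c * e))).tendsto 0
  have hVapprox : ∀ᶠ e in 𝓝[>] 0, ∀ x m, F x (V e x) ≤ F x m + 2 * (γ * (c * e)) :=
    hpos.mono fun e he x => le_add_two_mul_of_abs_sub_le
      (abs_cvarObjective_sub_le hp₀ hp1 (by linarith) (happrox e he) _) (hVmin e he x)
  have hu : ∀ᶠ e in 𝓝[>] 0, xε e ∈ X ∧ V e (xε e) ≤ V e xstar :=
    hpos.mono fun e he => ⟨(hxε e he).1, (hxε e he).2 xstar hxstar⟩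
  refine ⟨tendsto_approxMin_of_isCompact hX hF hconv hMstar hVaRmin hcoer hδ hVapprox hu,
    fun εν hεν hεν0 xinf hxinf => ?_⟩
  have hmap : Tendsto εν atTop (𝓝[>] 0) := tendsto_nhdsWithin_iff.2 ⟨hεν0, .of_forall hεν⟩
  obtain ⟨hxinfX, hsInf⟩ := mem_and_sInf_minimizers_le_of_mapClusterPt hX hF hconv hMstar
    hVaRmin hcoer hδ hVapprox hu (hxinf.of_comp hmap)
  exact ⟨hxinfX, fun x' hx' m' hm' => hsInf.trans (hVaRmin x' hx' m' hm')⟩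

/-- convergence of the smoothing approximation: if the VaR minimization
problem has a minimizer x* whose CVaR argmin set M(x*) is a singleton {m*}, and for
each ε > 0, x^ε minimizes the smoothed VaR over X, then m_ε = VaR_{β,ε}(x^ε) → m* as
ε ↓ 0, and every accumulation point of {x^{ε_ν}} for ε_ν ↓ 0 minimizes VaR_β over X. -/
theorem stmt_19
    (n k : ℕ) (β : ℝ) (hβ : β ∈ Set.Ioo (0:ℝ) 1)
    (p : Fin k → ℝ) (hp : ∀ i, 0 < p i) (hp1 : ∑ i, p i = 1)
    (y : Fin k → Fin n → ℝ)
    (X : Set (Fin n → ℝ)) (hX : IsCompact X) (hXne : X.Nonempty)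
    -- the discretized CVaR minimand and its argmin set
    (f : (Fin n → ℝ) → ℝ → ℝ)
    (hf : f = fun x m => m + (1 / (1 - β)) * ∑ i, p i * max 0 ((∑ j, x j * y i j) - m))
    (M : (Fin n → ℝ) → Set ℝ)
    (hM : M = fun x => {m | ∀ m' : ℝ, f x m ≤ f x m'})
    -- the smoothing family and the smoothed minimand
    (c : ℝ) (hc : 0 < c)
    (ρ : ℝ → ℝ → ℝ)
    (hρnn : ∀ e, 0 < e → ∀ t, 0 ≤ ρ e t)
    (hρsc : ∀ e, 0 < e → StrictConvexOn ℝ Set.univ (ρ e))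
    (hρC2 : ∀ e, 0 < e → ContDiff ℝ 2 (ρ e))
    (hρ' : ∀ e, 0 < e → ∀ t, |deriv (ρ e) t| ≤ 1)
    (happrox : ∀ e, 0 < e → ∀ t, |max 0 t - ρ e t| ≤ c * e)
    (g : ℝ → (Fin n → ℝ) → ℝ → ℝ)
    (hg : g = fun e x m =>
      m + (1 / (1 - β)) * ∑ i, p i * ρ e ((∑ j, x j * y i j) - m))
    -- VaR_{β,ε}(x): the unique minimizer of the smoothed minimand
    (V : ℝ → (Fin n → ℝ) → ℝ)
    (hVmin : ∀ e, 0 < e → ∀ x, ∀ m : ℝ, g e x (V e x) ≤ g e x m)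
    (hVuniq : ∀ e, 0 < e → ∀ x, ∀ m0 : ℝ, (∀ m : ℝ, g e x m0 ≤ g e x m) → m0 = V e x)
    -- the minimizer x* of VaR_β over X, with singleton argmin set {m*}
    (xstar : Fin n → ℝ) (mstar : ℝ)
    (hxstar : xstar ∈ X) (hMstar : M xstar = {mstar})
    (hVaRmin : ∀ x ∈ X, ∀ mx ∈ M x, mstar ≤ mx)
    -- for each ε > 0, x^ε globally minimizes V ε over X
    (xε : ℝ → Fin n → ℝ)
    (hxε : ∀ e, 0 < e → xε e ∈ X ∧ ∀ x' ∈ X, V e (xε e) ≤ V e x') :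
    Filter.Tendsto (fun e => V e (xε e)) (nhdsWithin 0 (Set.Ioi 0)) (nhds mstar) ∧
    (∀ εν : ℕ → ℝ, (∀ ν, 0 < εν ν) →
      Filter.Tendsto εν Filter.atTop (nhds 0) →
      ∀ xinf : Fin n → ℝ,
        MapClusterPt xinf Filter.atTop (fun ν => xε (εν ν)) →
        xinf ∈ X ∧ ∀ x' ∈ X, ∀ m' ∈ M x', sInf (M xinf) ≤ m') :=
  stmt_19_general n k β hβ p hp hp1 y X hX f hf M hM c ρ happrox g hg V hVmin xstar mstar hxstar
    hMstar hVaRmin xε hxε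
end
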